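/- arXiv:2010.01419 — 3 statements merged into one kernel-verified Lean document; each statement's English description precedes it below -/
import Mathlib

section
/- For any polynomial P in k[x_1,...,x_n], the polynomial ∂_{w_0}(P) obtained by applying the Demazure operator of the longest element w_0 of the symmetric group S_n is a symmetric polynomial. -/
/-!
Let `Δ = ∏_{i<j} (X_j - X_i)` and `N = n(n-1)/2`. By induction on the word `M`,
`Δ · ∂_M P = ∑_v p_v · v(P)` with coefficients `p_v` independent of `P`, of degree at most
`N - |M|`, satisfying the GKM conditions `X_a - X_b ∣ p_v + t(p_{t v})` for every transposition
`t = (a b)`. Applying `∂_r` replaces `p_v` by `(p_v + s_r(p_{s_r v})) / (X_r - X_{r+1})`, and the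
GKM conditions survive this division because each `X_a - X_b` is prime. When `|M| = N` the
coefficients are constants, so the GKM conditions force `p_{t v} = -p_v`: then `Δ · ∂_M P` is
alternating, and since `Δ` is alternating too, `∂_M P` is symmetric.
-/

open MvPolynomial

/-- The adjacent transposition `s_r = (r, r+1)` of `{1,…,n}` (0-indexed). -/
noncomputable def adjSwap (n : ℕ) (r : ℕ) : Equiv.Perm (Fin n) :=
  if h : r + 1 < n then Equiv.swap ⟨r, by omega⟩ ⟨r + 1, h⟩ else 1

/-- Composition of the operators `D_{k_1} ∘ ⋯ ∘ D_{k_r}` along a word `[k_1,…,k_r]`. -/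
def DComp {A : Type*} (D : ℕ → A → A) : List ℕ → A → A
  | [], P => P
  | r :: L, P => D r (DComp D L P)

namespace MvPolynomial

open Equiv Finset

section Substitution

variable {σ k : Type*} [CommRing k]

theorem dvd_sub_of_forall_dvd_X_sub {p : MvPolynomial σ k}
    (ψ : MvPolynomial σ k →ₐ[k] MvPolynomial σ k) (h : ∀ i, p ∣ X i - ψ (X i))
    (f : MvPolynomial σ k) : p ∣ f - ψ f := by
  let π := Ideal.Quotient.mkₐ k (Ideal.span {p})
  have hπ : π = π.comp ψ := algHom_ext fun i =>
    Ideal.Quotient.eq.mpr (Ideal.mem_span_singleton.mpr (h i))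
  rw [← Ideal.mem_span_singleton, ← Ideal.Quotient.eq]
  exact DFunLike.congr_fun hπ f

theorem X_sub_X_dvd_sub_rename_swap [DecidableEq σ] (a b : σ) (f : MvPolynomial σ k) :
    X a - X b ∣ f - rename (swap a b) f := by
  refine dvd_sub_of_forall_dvd_X_sub _ (fun i => ?_) f
  rw [rename_X, swap_apply_def]
  split_ifs with ha hb
  · subst ha; exact ⟨1, by ring⟩
  · subst hb; exact ⟨-1, by ring⟩
  · simp

theorem totalDegree_X_sub_X_mul [IsDomain k] {a b : σ} (hab : a ≠ b) {g : MvPolynomial σ k}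
    (hg : g ≠ 0) : ((X a - X b) * g).totalDegree = g.totalDegree + 1 := by
  have hX : (X a - X b : MvPolynomial σ k) ≠ 0 := sub_ne_zero.mpr fun h => hab (X_injective h)
  rw [totalDegree_mul_of_isDomain hX hg,
    ((isHomogeneous_X k a).sub (isHomogeneous_X k b)).totalDegree hX, add_comm]

theorem X_sub_X_dvd_rename_swap_iff [DecidableEq σ] {a b : σ} {f : MvPolynomial σ k} :
    X a - X b ∣ rename (swap a b) f ↔ X a - X b ∣ f :=
  (dvd_iff_dvd_of_dvd_sub (X_sub_X_dvd_sub_rename_swap a b f)).symm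

theorem isSymmetric_of_forall_rename_swap [Finite σ] [DecidableEq σ] {φ : MvPolynomial σ k}
    (h : ∀ a b, a ≠ b → rename (swap a b) φ = φ) : φ.IsSymmetric := fun e => by
  induction e using Perm.swap_induction_on with
  | one => simp
  | swap_mul f a b hab hf => rw [Perm.coe_mul, ← rename_rename, hf, h a b hab]

variable [DecidableEq σ] {a b : σ}

theorem X_sub_X_dvd_iff (hab : a ≠ b) (f : MvPolynomial σ k) :
    X a - X b ∣ f ↔ aeval (Function.update (X : σ → MvPolynomial σ k) b (X a)) f = 0 := by
  constructor
  · rintro ⟨g, rfl⟩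
    simp [Function.update_of_ne hab]
  · intro hf
    rw [← sub_zero f, ← hf]
    refine dvd_sub_of_forall_dvd_X_sub _ (fun i => ?_) f
    rw [aeval_X, Function.update_apply]
    split_ifs with hi
    · subst hi; exact ⟨-1, by ring⟩
    · simp

theorem prime_X_sub_X [IsDomain k] (hab : a ≠ b) : Prime (X a - X b : MvPolynomial σ k) := by
  refine ⟨sub_ne_zero.mpr fun h => hab (X_injective h), fun hu => ?_, fun f g hfg => ?_⟩
  · have := (X_sub_X_dvd_iff hab 1).mp (isUnit_iff_dvd_one.mp hu)
    simp at this
  · simp only [X_sub_X_dvd_iff hab, map_mul, mul_eq_zero] at hfg ⊢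
    exact hfg

theorem X_sub_X_dvd_C_iff (hab : a ≠ b) (c : k) :
    X a - X b ∣ (C c : MvPolynomial σ k) ↔ c = 0 := by
  simp [X_sub_X_dvd_iff hab]

theorem swap_eq_of_X_sub_X_dvd [Nontrivial k] {c d : σ} (hab : a ≠ b) (hcd : c ≠ d)
    (h : X a - X b ∣ (X c - X d : MvPolynomial σ k)) : swap c d = swap a b := by
  rw [X_sub_X_dvd_iff hab, map_sub, aeval_X, aeval_X, sub_eq_zero,
    Function.update_apply, Function.update_apply] at h
  split_ifs at h with hc hd hd
  · exact absurd (hc.trans hd.symm) hcd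
  · rw [hc, X_injective h.symm, swap_comm]
  · rw [hd, X_injective h]
  · exact absurd (X_injective h) hcd

end Substitution

section Vandermonde

variable {n : ℕ} {k : Type*} [CommRing k]

variable (n k) in
noncomputable def vandermondePoly : MvPolynomial (Fin n) k :=
  ∏ i : Fin n, ∏ j ∈ Finset.Ioi i, (X j - X i)

theorem vandermondePoly_eq_det :
    vandermondePoly n k = (Matrix.vandermonde (X : Fin n → MvPolynomial (Fin n) k)).det :=
  (Matrix.det_vandermonde _).symm

theorem rename_swap_vandermondePoly {a b : Fin n} (hab : a ≠ b) :
    rename (swap a b) (vandermondePoly n k) = -vandermondePoly n k := by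
  let f : MvPolynomial (Fin n) k →+* MvPolynomial (Fin n) k :=
    (rename (swap a b) : MvPolynomial (Fin n) k →ₐ[k] _).toRingHom
  have hmap : f.mapMatrix (Matrix.vandermonde X) =
      (Matrix.vandermonde X).submatrix (swap a b) id := by
    ext i j
    simp [f, Matrix.vandermonde]
  rw [vandermondePoly_eq_det]
  change f _ = _
  rw [RingHom.map_det f, hmap, Matrix.det_permute, Perm.sign_swap hab]
  simp

theorem X_sub_X_dvd_vandermondePoly {a b : Fin n} (hab : a ≠ b) :
    X a - X b ∣ vandermondePoly n k := by
  have hdvd : ∀ {i j : Fin n}, i < j → X j - X i ∣ vandermondePoly n k := fun {i j} h =>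
    (Finset.dvd_prod_of_mem (fun j => X j - X i) (Finset.mem_Ioi.mpr h)).trans
      (Finset.dvd_prod_of_mem (fun i => ∏ j ∈ Finset.Ioi i, (X j - X i)) (Finset.mem_univ i))
  rcases hab.lt_or_gt with h | h
  · rw [← neg_sub, neg_dvd]
    exact hdvd h
  · exact hdvd h

theorem vandermondePoly_ne_zero [IsDomain k] : vandermondePoly n k ≠ 0 :=
  Finset.prod_ne_zero_iff.mpr fun _ _ => Finset.prod_ne_zero_iff.mpr fun _ hj =>
    sub_ne_zero.mpr fun h => (Finset.mem_Ioi.mp hj).ne' (X_injective h)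

theorem totalDegree_vandermondePoly_le :
    (vandermondePoly n k).totalDegree ≤ n * (n - 1) / 2 := by
  have hdeg : (vandermondePoly n k).IsHomogeneous (∑ i : Fin n, ∑ _j ∈ Finset.Ioi i, 1) :=
    IsHomogeneous.prod _ _ _ fun i _ => IsHomogeneous.prod _ _ _ fun j _ =>
      (isHomogeneous_X k j).sub (isHomogeneous_X k i)
  have hsum : ∑ i : Fin n, ∑ _j ∈ Finset.Ioi i, 1 = n * (n - 1) / 2 := by
    simp only [Finset.sum_const, smul_eq_mul, mul_one, Fin.card_Ioi]
    rw [Fin.sum_univ_eq_sum_range (fun i => n - 1 - i), Finset.sum_range_reflect (fun i => i),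
      Finset.sum_range_id]
  exact hsum ▸ hdeg.totalDegree_le

end Vandermonde

section Families

variable {σ k : Type*} [CommRing k]

noncomputable def permTwist (τ : Perm σ) (p : Perm σ → MvPolynomial σ k) (v : Perm σ) :
    MvPolynomial σ k :=
  rename τ (p (τ⁻¹ * v))

theorem permTwist_one (p : Perm σ → MvPolynomial σ k) : permTwist 1 p = p := by
  funext v
  simp [permTwist]

theorem permTwist_mul (τ τ' : Perm σ) (p : Perm σ → MvPolynomial σ k) :
    permTwist (τ * τ') p = permTwist τ (permTwist τ' p) := by
  funext v
  simp [permTwist, rename_rename, mul_assoc]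

theorem permTwist_add (τ : Perm σ) (p q : Perm σ → MvPolynomial σ k) :
    permTwist τ (p + q) = permTwist τ p + permTwist τ q := by
  funext v
  simp [permTwist]

theorem totalDegree_permTwist_le (τ : Perm σ) (p : Perm σ → MvPolynomial σ k) (v : Perm σ) :
    (permTwist τ p v).totalDegree ≤ (p (τ⁻¹ * v)).totalDegree :=
  totalDegree_rename_le _ _

theorem permTwist_const_mul (τ : Perm σ) (f : MvPolynomial σ k)
    (p : Perm σ → MvPolynomial σ k) (v : Perm σ) :
    permTwist τ (fun w => f * p w) v = rename τ f * permTwist τ p v :=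
  map_mul _ _ _

theorem permTwist_swap_permTwist_swap [DecidableEq σ] (a b : σ)
    (p : Perm σ → MvPolynomial σ k) :
    permTwist (swap a b) (permTwist (swap a b) p) = p := by
  rw [← permTwist_mul, swap_mul_self, permTwist_one]

variable [DecidableEq σ]

/-- The GKM (Goresky–Kottwitz–MacPherson) divisibility conditions. -/
def IsGKM (p : Perm σ → MvPolynomial σ k) : Prop :=
  ∀ a b, a ≠ b → ∀ v, X a - X b ∣ (p + permTwist (swap a b) p) v

theorem IsGKM.add {p q : Perm σ → MvPolynomial σ k} (hp : IsGKM p) (hq : IsGKM q) :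
    IsGKM (p + q) := fun a b hab v => by
  rw [permTwist_add, add_add_add_comm]
  exact dvd_add (hp a b hab v) (hq a b hab v)

theorem IsGKM.permTwist {p : Perm σ → MvPolynomial σ k} (hp : IsGKM p) (τ : Perm σ) :
    IsGKM (permTwist τ p) := fun a b hab v => by
  have hX : rename τ (X (τ⁻¹ a) - X (τ⁻¹ b) : MvPolynomial σ k) = X a - X b := by simp
  rw [← permTwist_mul, swap_mul_eq_mul_swap, permTwist_mul, ← permTwist_add, ← hX]
  exact map_dvd (rename τ) (hp (τ⁻¹ a) (τ⁻¹ b) (by simpa using hab) (τ⁻¹ * v))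

theorem isGKM_of_forall_X_sub_X_dvd {p : Perm σ → MvPolynomial σ k}
    (h : ∀ a b, a ≠ b → ∀ v, X a - X b ∣ p v) : IsGKM p := fun a b hab v =>
  dvd_add (h a b hab v) (X_sub_X_dvd_rename_swap_iff.mpr (h a b hab _))

theorem isGKM_of_X_sub_X_mul_eq [IsDomain k] {c d : σ} (hcd : c ≠ d)
    {p q : Perm σ → MvPolynomial σ k} (hq : IsGKM q) (hsq : permTwist (swap c d) q = q)
    (hpq : q = fun v => (X c - X d) * p v) : IsGKM p := by
  intro a b hab v
  set α : MvPolynomial σ k := X c - X d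
  set t := swap a b
  have hpq' : permTwist t q v = rename t α * permTwist t p v := by
    rw [hpq, permTwist_const_mul]
  by_cases hs : t = swap c d
  · -- twisting by `swap c d` fixes `q` but negates `α`
    suffices (p + permTwist t p) v = 0 by rw [this]; exact dvd_zero _
    apply mul_left_cancel₀ (prime_X_sub_X hcd).ne_zero
    have hα : rename t α = -α := by simp [α, hs]
    calc α * (p + permTwist t p) v = α * p v - rename t α * permTwist t p v := by
          rw [Pi.add_apply, hα]; ring
      _ = q v - permTwist t q v := by rw [hpq', hpq]
      _ = 0 := by rw [hs, hsq, sub_self]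
      _ = α * 0 := (mul_zero α).symm
  · -- clear the denominators `α` and `t α`, neither of which `X a - X b` divides
    have hkey : α * rename t α * (p + permTwist t p) v
        = rename t α * (q + permTwist t q) v + (α - rename t α) * permTwist t q v := by
      rw [Pi.add_apply, Pi.add_apply, hpq', hpq]
      ring
    have hdvd : X a - X b ∣ α * rename t α * (p + permTwist t p) v := by
      rw [hkey]
      exact dvd_add (dvd_mul_of_dvd_right (hq a b hab v) _)
        (dvd_mul_of_dvd_left (X_sub_X_dvd_sub_rename_swap a b α) _)
    have hndvd : ¬ X a - X b ∣ α := fun h => hs (swap_eq_of_X_sub_X_dvd hab hcd h).symm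
    rcases (prime_X_sub_X hab).dvd_or_dvd hdvd with h | h
    · rcases (prime_X_sub_X hab).dvd_or_dvd h with h | h
      · exact absurd h hndvd
      · exact absurd (X_sub_X_dvd_rename_swap_iff.mp h) hndvd
    · exact h

theorem permTwist_swap_eq_neg_of_isGKM {p : Perm σ → MvPolynomial σ k} (hp : IsGKM p)
    (hdeg : ∀ v, (p v).totalDegree = 0) {a b : σ} (hab : a ≠ b) :
    permTwist (swap a b) p = -p := by
  funext v
  have h0 : ((p + permTwist (swap a b) p) v).totalDegree = 0 :=
    Nat.eq_zero_of_le_zero ((totalDegree_add _ _).trans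
      (max_le (hdeg v).le ((totalDegree_permTwist_le _ _ _).trans (hdeg _).le)))
  have hC := totalDegree_eq_zero_iff_eq_C.mp h0
  have h := hp a b hab v
  rw [hC, X_sub_X_dvd_C_iff hab] at h
  rw [h, C_0] at hC
  exact eq_neg_of_add_eq_zero_right hC

variable [Fintype σ]

noncomputable def permSum (p : Perm σ → MvPolynomial σ k) (P : MvPolynomial σ k) :
    MvPolynomial σ k :=
  ∑ v, p v * rename v P

theorem permSum_add (p q : Perm σ → MvPolynomial σ k) (P : MvPolynomial σ k) :
    permSum (p + q) P = permSum p P + permSum q P := by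
  simp [permSum, add_mul, Finset.sum_add_distrib]

theorem rename_permSum (τ : Perm σ) (p : Perm σ → MvPolynomial σ k) (P : MvPolynomial σ k) :
    rename τ (permSum p P) = permSum (permTwist τ p) P := by
  simp only [permSum, permTwist, map_sum, map_mul, rename_rename, ← Perm.coe_mul]
  exact Fintype.sum_equiv (Equiv.mulLeft τ) _ _ fun v => by simp

theorem permSum_neg (p : Perm σ → MvPolynomial σ k) (P : MvPolynomial σ k) :
    permSum (-p) P = -permSum p P := by
  simp [permSum]

theorem permSum_const_mul (f : MvPolynomial σ k) (p : Perm σ → MvPolynomial σ k)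
    (P : MvPolynomial σ k) : permSum (fun v => f * p v) P = f * permSum p P := by
  simp [permSum, Finset.mul_sum, mul_assoc]

theorem permSum_single_one (f P : MvPolynomial σ k) : permSum (Pi.single 1 f) P = f * P := by
  rw [permSum, Finset.sum_eq_single 1 (fun v _ hv => by simp [hv]) (by simp)]
  simp

end Families

section Demazure

variable {n : ℕ} {k : Type*} [CommRing k]

theorem rename_swap_vandermondePoly_mul {a b : Fin n} (hab : a ≠ b)
    (Q : MvPolynomial (Fin n) k) :
    rename (swap a b) (vandermondePoly n k * Q) =
      -(vandermondePoly n k * rename (swap a b) Q) := by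
  rw [map_mul, rename_swap_vandermondePoly hab, neg_mul]

theorem X_sub_X_mul_vandermondePoly_mul {c d : Fin n} (hcd : c ≠ d)
    {p : Perm (Fin n) → MvPolynomial (Fin n) k} {P Q Q' : MvPolynomial (Fin n) k}
    (hQ : vandermondePoly n k * Q = permSum p P)
    (hQ' : (X c - X d) * Q' = Q - rename (swap c d) Q) :
    (X c - X d) * (vandermondePoly n k * Q') = permSum (p + permTwist (swap c d) p) P := by
  rw [permSum_add, ← rename_permSum, ← hQ, rename_swap_vandermondePoly_mul hcd, mul_left_comm,
    hQ']
  ring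

theorem rename_swap_eq_of_vandermondePoly_mul_eq [IsDomain k] {a b : Fin n} (hab : a ≠ b)
    {p : Perm (Fin n) → MvPolynomial (Fin n) k} {P Q : MvPolynomial (Fin n) k}
    (hQ : vandermondePoly n k * Q = permSum p P) (hp : permTwist (swap a b) p = -p) :
    rename (swap a b) Q = Q := by
  apply mul_left_cancel₀ vandermondePoly_ne_zero
  have h := rename_permSum (swap a b) p P
  rwa [hp, permSum_neg, ← hQ, rename_swap_vandermondePoly_mul hab, neg_inj] at h

end Demazure

end MvPolynomial

open Equiv

theorem exists_vandermondePoly_mul_DComp_eq {k : Type*} [CommRing k] [IsDomain k] {n : ℕ}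
    (D : ℕ → MvPolynomial (Fin n) k → MvPolynomial (Fin n) k)
    (hD : ∀ (r : ℕ) (hr : r + 1 < n) (P : MvPolynomial (Fin n) k),
      (X (⟨r, by omega⟩ : Fin n) - X ⟨r + 1, hr⟩) * D r P
        = P - rename (swap (⟨r, by omega⟩ : Fin n) ⟨r + 1, hr⟩) P)
    (M : List ℕ) (hM : ∀ r ∈ M, r + 1 < n) (hlen : M.length ≤ n * (n - 1) / 2) :
    ∃ p : Perm (Fin n) → MvPolynomial (Fin n) k,
      (∀ P, vandermondePoly n k * DComp D M P = permSum p P) ∧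
      (∀ v, (p v).totalDegree + M.length ≤ n * (n - 1) / 2) ∧ IsGKM p := by
  induction M with
  | nil =>
    refine ⟨Pi.single 1 (vandermondePoly n k), fun P => (permSum_single_one _ _).symm,
      fun v => ?_, isGKM_of_forall_X_sub_X_dvd fun a b hab v => ?_⟩
    · rcases eq_or_ne v 1 with rfl | hv
      · simpa using totalDegree_vandermondePoly_le
      · simp [hv]
    · rcases eq_or_ne v 1 with rfl | hv
      · simpa using X_sub_X_dvd_vandermondePoly hab
      · simp [hv]
  | cons r M ih =>
    have hr : r + 1 < n := hM r List.mem_cons_self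
    obtain ⟨p, hp, hdeg, hgkm⟩ :=
      ih (fun x hx => hM x (List.mem_cons_of_mem r hx)) (by simp at hlen; omega)
    set c : Fin n := ⟨r, by omega⟩
    set d : Fin n := ⟨r + 1, hr⟩
    have hcd : c ≠ d := by simp [c, d, Fin.ext_iff]
    choose p' hp' using hgkm c d hcd
    have hq : p + permTwist (swap c d) p = fun v => (X c - X d) * p' v := funext hp'
    refine ⟨p', fun P => ?_, fun v => ?_, isGKM_of_X_sub_X_mul_eq hcd
      (hgkm.add (hgkm.permTwist _)) ?_ hq⟩
    · apply mul_left_cancel₀ (prime_X_sub_X hcd).ne_zero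
      rw [DComp, X_sub_X_mul_vandermondePoly_mul hcd (hp P) (hD r hr _), hq, permSum_const_mul]
    · have hq_le := (totalDegree_add (p v) (permTwist (swap c d) p v)).trans
        (max_le_max (le_refl _) (totalDegree_permTwist_le _ _ _))
      have hpv := hdeg v
      have hptv := hdeg ((swap c d)⁻¹ * v)
      rw [List.length_cons] at hlen ⊢
      rcases eq_or_ne (p' v) 0 with h | h
      · rw [h, totalDegree_zero]
        omega
      · have hp'v := totalDegree_X_sub_X_mul hcd h
        rw [← hp' v, Pi.add_apply] at hp'v
        omega
    · rw [permTwist_add, permTwist_swap_permTwist_swap, add_comm]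

/-- For any reduced word `L` for the longest element `w₀` of `S_n`
(i.e. a word of adjacent transpositions of length `n(n-1)/2` whose product is `w₀`),
and any polynomial `P`, the polynomial `∂_{w₀}(P)` is symmetric. -/
theorem demazure_longest_symmetric (k : Type*) [CommRing k] [IsDomain k] (n : ℕ)
    (D : ℕ → MvPolynomial (Fin n) k → MvPolynomial (Fin n) k)
    (hD : ∀ (r : ℕ) (hr : r + 1 < n) (P : MvPolynomial (Fin n) k),
      (X (⟨r, by omega⟩ : Fin n) - X ⟨r + 1, hr⟩) * D r P
        = P - rename (Equiv.swap (⟨r, by omega⟩ : Fin n) ⟨r + 1, hr⟩) P)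
    (L : List ℕ) (hmem : ∀ r ∈ L, r + 1 < n)
    (hlen : L.length = n * (n - 1) / 2) :
    ∀ P : MvPolynomial (Fin n) k, (DComp D L P).IsSymmetric := by
  intro P
  obtain ⟨p, hp, hdeg, hgkm⟩ := exists_vandermondePoly_mul_DComp_eq D hD L hmem hlen.le
  have hconst : ∀ v, (p v).totalDegree = 0 := fun v => by have := hdeg v; omega
  exact isSymmetric_of_forall_rename_swap fun a b hab =>
    rename_swap_eq_of_vandermondePoly_mul_eq hab (hp P)
      (permTwist_swap_eq_neg_of_isGKM hgkm hconst hab)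
end

section
/- The ring homomorphism φ: ℤ[u_1,...,u_n,v_1,...,v_n] → ℤ[x_1,...,x_n,c_1,...,c_n]/(c_1²,...,c_n²) defined by u_i ↦ x_i and v_i ↦ x_i + c_i, restricted to (S_n × S_n)-invariants (S_n permuting the u_i's and independently the v_i's) into S_n-invariants (S_n permuting the pairs (x_i, c_i) simultaneously), is surjective when the coefficient ring is a field of characteristic zero. -/
open MvPolynomial

noncomputable section

/-- `k[u_1,…,u_n,v_1,…,v_n]` (source) and `k[x_1,…,x_n,c_1,…,c_n]` (ambient of target):
`inl` = `u`'s resp. `x`'s, `inr` = `v`'s resp. `c`'s. -/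
abbrev PolyUV (k : Type*) [CommRing k] (n : ℕ) := MvPolynomial (Fin n ⊕ Fin n) k

def cSqIdeal (k : Type*) [CommRing k] (n : ℕ) : Ideal (PolyUV k n) :=
  Ideal.span (Set.range fun i : Fin n => (X (Sum.inr i) : PolyUV k n) ^ 2)

/-- The target: `k[x_1,…,x_n,c_1,…,c_n]/(c_1²,…,c_n²)`. -/
abbrev TruncPoly (k : Type*) [CommRing k] (n : ℕ) := PolyUV k n ⧸ cSqIdeal k n

def tmk (k : Type*) [CommRing k] (n : ℕ) : PolyUV k n →+* TruncPoly k n :=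
  Ideal.Quotient.mk (cSqIdeal k n)

/-- The homomorphism `φ : k[u,v] → k[x,c]/(c²)`, `u_i ↦ x_i`, `v_i ↦ x_i + c_i`. -/
def phiUV (k : Type*) [CommRing k] (n : ℕ) : PolyUV k n →ₐ[k] TruncPoly k n :=
  aeval (Sum.elim (fun i => tmk k n (X (Sum.inl i)))
    (fun i => tmk k n (X (Sum.inl i) + X (Sum.inr i))))

/-! Averaging over `S_n` reduces the claim to the orbit sums `∑_σ ∏ᵢ x_{σ i} ^ aᵢ * c_{σ i} ^ bᵢ`.
By Weyl's argument these lie, in characteristic zero, in the algebra generated by the polarized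
power sums `∑ᵢ xᵢ ^ a * cᵢ ^ b`, by induction on the number of points with nonzero exponent.
Modulo the `cᵢ ^ 2` the polarized power sums are `φ (∑ uᵢ ^ a)`,
`φ ((a + 1)⁻¹ • ∑ (vᵢ ^ (a + 1) - uᵢ ^ (a + 1)))` and `0`. -/

open Finset

theorem add_pow_succ_of_sq_eq_zero {R : Type*} [CommRing R] (x : R) {c : R} (hc : c ^ 2 = 0)
    (m : ℕ) : (x + c) ^ (m + 1) = x ^ (m + 1) + (m + 1) * x ^ m * c := by
  induction m with
  | zero => ring
  | succ m ih =>
    rw [pow_succ, ih]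
    push_cast
    linear_combination ((m : R) + 1) * x ^ m * hc

theorem Subalgebra.mem_of_nsmul_mem {k A : Type*} [Field k] [CharZero k] [Ring A] [Algebra k A]
    (S : Subalgebra k A) {c : ℕ} (hc : c ≠ 0) {x : A} (h : c • x ∈ S) : x ∈ S := by
  rw [← Nat.cast_smul_eq_nsmul k] at h
  exact (Submodule.smul_mem_iff (Subalgebra.toSubmodule S) (Nat.cast_ne_zero.mpr hc)).mp h

theorem update_zero_add_single_eq_comp_swap {ι M : Type*} [DecidableEq ι] [AddZeroClass M]
    {d : ι → M} {i j : ι} (hi : Function.update d j 0 i = 0) :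
    Function.update d j 0 + Pi.single i (d j) = d ∘ Equiv.swap j i := by
  funext x
  simp only [Pi.add_apply, Function.comp_apply, Function.update_apply, Pi.single_apply,
    Equiv.swap_apply_def] at hi ⊢
  split_ifs at hi ⊢ <;> simp_all

namespace PolyUV

section Multisymmetric

variable (k : Type*) [CommRing k] {n : ℕ}

def pointMonomial (e : ℕ × ℕ) (i : Fin n) : PolyUV k n :=
  X (Sum.inl i) ^ e.1 * X (Sum.inr i) ^ e.2

variable (n) in
def polarizedPowerSum (e : ℕ × ℕ) : PolyUV k n :=
  ∑ i, pointMonomial k e i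

def diagMonomial (d : Fin n → ℕ × ℕ) : PolyUV k n :=
  ∏ i, pointMonomial k (d i) i

def orbitSum (d : Fin n → ℕ × ℕ) : PolyUV k n :=
  ∑ σ : Equiv.Perm (Fin n), diagMonomial k (d ∘ σ)

variable (n) in
def diagSymmetrize : PolyUV k n →ₗ[k] PolyUV k n :=
  ∑ σ : Equiv.Perm (Fin n), (rename (Equiv.sumCongr σ σ)).toLinearMap

variable {k}

theorem diagSymmetrize_apply (p : PolyUV k n) :
    diagSymmetrize k n p = ∑ σ : Equiv.Perm (Fin n), rename (Equiv.sumCongr σ σ) p := by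
  simp [diagSymmetrize]

theorem pointMonomial_zero (i : Fin n) : pointMonomial k 0 i = 1 := by
  simp [pointMonomial]

theorem pointMonomial_add (e e' : ℕ × ℕ) (i : Fin n) :
    pointMonomial k (e + e') i = pointMonomial k e i * pointMonomial k e' i := by
  simp only [pointMonomial, Prod.fst_add, Prod.snd_add, pow_add]
  ring

theorem diagMonomial_zero : diagMonomial k (0 : Fin n → ℕ × ℕ) = 1 := by
  simp [diagMonomial, pointMonomial_zero]

theorem diagMonomial_add_single (d : Fin n → ℕ × ℕ) (j : Fin n) (e : ℕ × ℕ) :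
    diagMonomial k (d + Pi.single j e) = diagMonomial k d * pointMonomial k e j := by
  simp only [diagMonomial, Pi.add_apply, pointMonomial_add, prod_mul_distrib]
  congr 1
  rw [Fintype.prod_eq_single j fun i hi => by rw [Pi.single_eq_of_ne hi, pointMonomial_zero],
    Pi.single_eq_same]

theorem rename_diagMonomial (d : Fin n → ℕ × ℕ) (σ : Equiv.Perm (Fin n)) :
    rename (Equiv.sumCongr σ σ) (diagMonomial k d) = diagMonomial k (d ∘ σ.symm) := by
  simp only [diagMonomial, pointMonomial, map_prod, map_mul, map_pow, rename_X,
    Equiv.sumCongr_apply, Sum.map_inl, Sum.map_inr, Function.comp_apply]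
  conv_rhs => rw [← Equiv.prod_comp σ]
  simp

theorem diagSymmetrize_diagMonomial (d : Fin n → ℕ × ℕ) :
    diagSymmetrize k n (diagMonomial k d) = orbitSum k d := by
  simp only [diagSymmetrize_apply, rename_diagMonomial, orbitSum]
  exact Equiv.sum_comp (Equiv.inv (Equiv.Perm (Fin n))) fun σ => diagMonomial k (d ∘ σ)

theorem monomial_eq_smul_diagMonomial (m : Fin n ⊕ Fin n →₀ ℕ) (a : k) :
    monomial m a = a • diagMonomial k fun i => (m (Sum.inl i), m (Sum.inr i)) := by
  rw [monomial_eq, smul_eq_C_mul,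
    Finsupp.prod_fintype _ _ fun _ => pow_zero _, Fintype.prod_sum_type,
    ← prod_mul_distrib]
  rfl

theorem orbitSum_zero :
    orbitSum k (0 : Fin n → ℕ × ℕ) = (Fintype.card (Equiv.Perm (Fin n)) : PolyUV k n) := by
  simp [orbitSum, diagMonomial_zero]

theorem orbitSum_comp_perm (d : Fin n → ℕ × ℕ) (π : Equiv.Perm (Fin n)) :
    orbitSum k (d ∘ π) = orbitSum k d :=
  Fintype.sum_equiv (Equiv.mulLeft π) _ _ fun σ => by simp [Function.comp_assoc]

theorem orbitSum_mul_polarizedPowerSum (d : Fin n → ℕ × ℕ) (e : ℕ × ℕ) :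
    orbitSum k d * polarizedPowerSum k n e = ∑ j, orbitSum k (d + Pi.single j e) := by
  simp only [orbitSum, polarizedPowerSum, sum_mul_sum, ← diagMonomial_add_single]
  rw [sum_comm (γ := Fin n)]
  refine sum_congr rfl fun σ _ => ?_
  simp only [Pi.add_comp, Pi.single_comp_equiv]
  exact (Equiv.sum_comp σ.symm _).symm

/-- Multiplying by the power sum of `d j` puts the exponent `d j` back at every point; at each of
the points where `Function.update d j 0` vanishes this recovers the orbit of `d`. -/
theorem card_zeros_nsmul_orbitSum (d : Fin n → ℕ × ℕ) (j : Fin n) :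
    #{i | Function.update d j 0 i = 0} • orbitSum k d =
      orbitSum k (Function.update d j 0) * polarizedPowerSum k n (d j) -
        ∑ i with Function.update d j 0 i ≠ 0,
          orbitSum k (Function.update d j 0 + Pi.single i (d j)) := by
  rw [orbitSum_mul_polarizedPowerSum, ← sum_filter_add_sum_filter_not _
    (fun i => Function.update d j 0 i = 0), add_sub_cancel_right]
  rw [sum_congr rfl fun i hi => by
    rw [update_zero_add_single_eq_comp_swap (mem_filter.mp hi).2, orbitSum_comp_perm], sum_const]

end Multisymmetric

section Weyl

variable (k : Type*) [Field k] [CharZero k] (n : ℕ)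

def polarizedPowerSums : Subalgebra k (PolyUV k n) :=
  Algebra.adjoin k (Set.range (polarizedPowerSum k n))

variable {k n}

theorem orbitSum_mem_polarizedPowerSums (d : Fin n → ℕ × ℕ) :
    orbitSum k d ∈ polarizedPowerSums k n := by
  induction hr : #{i | d i ≠ 0} generalizing d with
  | zero =>
    obtain rfl : d = 0 := funext (by simpa using card_eq_zero.mp hr)
    rw [orbitSum_zero]
    exact natCast_mem _ _
  | succ r ih =>
    obtain ⟨j, hj⟩ : ({i | d i ≠ 0} : Finset (Fin n)).Nonempty := card_pos.mp (by omega)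
    set d' := Function.update d j 0
    have hd' : #{i | d' i ≠ 0} = r := by
      have : ({i | d' i ≠ 0} : Finset (Fin n)) = ({i | d i ≠ 0} : Finset (Fin n)).erase j := by
        ext i
        by_cases hi : i = j <;> simp [d', hi]
      rw [this, card_erase_of_mem hj, hr, Nat.add_sub_cancel]
    have hsupp : ∀ i, d' i ≠ 0 →
        #{x | (d' + Pi.single i (d j) : Fin n → ℕ × ℕ) x ≠ 0} = r := by
      intro i hi
      rw [← hd']
      congr 1
      ext x
      by_cases hx : x = i
      · subst hx
        simp [hi]
      · simp [hx]
    have hmem : #{i | d' i = 0} • orbitSum k d ∈ polarizedPowerSums k n := by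
      rw [card_zeros_nsmul_orbitSum]
      exact sub_mem (mul_mem (ih _ hd') (Algebra.subset_adjoin ⟨_, rfl⟩))
        (sum_mem fun i hi => ih _ (hsupp i (mem_filter.mp hi).2))
    exact (polarizedPowerSums k n).mem_of_nsmul_mem
      (card_ne_zero_of_mem (by simp [d'] : j ∈ ({i | d' i = 0} : Finset (Fin n)))) hmem

theorem diagSymmetrize_mem_polarizedPowerSums (p : PolyUV k n) :
    diagSymmetrize k n p ∈ polarizedPowerSums k n := by
  induction p using MvPolynomial.induction_on' with
  | monomial m a =>
    rw [monomial_eq_smul_diagMonomial, map_smul, diagSymmetrize_diagMonomial]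
    exact Subalgebra.smul_mem _ (orbitSum_mem_polarizedPowerSums _) a
  | add p q hp hq => exact map_add (diagSymmetrize k n) p q ▸ add_mem hp hq

end Weyl

section Truncation

variable (k : Type*) [CommRing k] (n : ℕ)

def separatelySymmetric : Subalgebra k (PolyUV k n) where
  carrier := {p | ∀ σ τ : Equiv.Perm (Fin n), rename (Equiv.sumCongr σ τ) p = p}
  mul_mem' ha hb σ τ := by rw [map_mul, ha, hb]
  add_mem' ha hb σ τ := by rw [map_add, ha, hb]
  algebraMap_mem' r _ _ := rename_C _ r

variable {k n}

theorem sum_X_inl_pow_mem_separatelySymmetric (m : ℕ) :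
    ∑ i : Fin n, X (Sum.inl i) ^ m ∈ separatelySymmetric k n := fun σ _ => by
  simpa using Equiv.sum_comp σ fun i => (X (Sum.inl i) : PolyUV k n) ^ m

theorem sum_X_inr_pow_mem_separatelySymmetric (m : ℕ) :
    ∑ i : Fin n, X (Sum.inr i) ^ m ∈ separatelySymmetric k n := fun _ τ => by
  simpa using Equiv.sum_comp τ fun i => (X (Sum.inr i) : PolyUV k n) ^ m

theorem tmk_X_inr_sq (i : Fin n) : tmk k n (X (Sum.inr i)) ^ 2 = 0 := by
  rw [← map_pow, tmk, Ideal.Quotient.eq_zero_iff_mem]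
  exact Ideal.subset_span ⟨i, rfl⟩

theorem phiUV_X_inl (i : Fin n) : phiUV k n (X (Sum.inl i)) = tmk k n (X (Sum.inl i)) :=
  aeval_X _ _

theorem phiUV_X_inr (i : Fin n) :
    phiUV k n (X (Sum.inr i)) = tmk k n (X (Sum.inl i)) + tmk k n (X (Sum.inr i)) := by
  simp [phiUV]

end Truncation

variable {k : Type*} [Field k] [CharZero k] {n : ℕ}

theorem tmk_polarizedPowerSum_mem (e : ℕ × ℕ) :
    tmk k n (polarizedPowerSum k n e) ∈ (separatelySymmetric k n).map (phiUV k n) := by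
  obtain ⟨a, _ | _ | b⟩ := e
  · refine ⟨_, sum_X_inl_pow_mem_separatelySymmetric a, ?_⟩
    simp [polarizedPowerSum, pointMonomial, phiUV]
  · -- `φ (v_i ^ (a + 1) - u_i ^ (a + 1)) = (a + 1) * x_i ^ a * c_i` because `c_i ^ 2 = 0`
    refine ⟨(a + 1 : k)⁻¹ • (∑ i : Fin n, X (Sum.inr i) ^ (a + 1) -
      ∑ i : Fin n, X (Sum.inl i) ^ (a + 1)), Subalgebra.smul_mem _
        (sub_mem (sum_X_inr_pow_mem_separatelySymmetric _)
          (sum_X_inl_pow_mem_separatelySymmetric _)) _, ?_⟩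
    change phiUV k n _ = _
    simp only [map_smul, map_sub, map_sum, map_pow, phiUV_X_inl, phiUV_X_inr,
      add_pow_succ_of_sq_eq_zero _ (tmk_X_inr_sq _), polarizedPowerSum, pointMonomial, map_mul]
    rw [sum_add_distrib, add_sub_cancel_left]
    simp only [zero_add, pow_one, mul_assoc, ← mul_sum]
    rw [show (a : TruncPoly k n) + 1 = algebraMap k _ ((a : k) + 1) by simp, ← Algebra.smul_def,
      smul_smul, inv_mul_cancel₀ (Nat.cast_add_one_ne_zero a), one_smul]
  · refine ⟨0, zero_mem _, ?_⟩
    rw [map_zero, eq_comm, polarizedPowerSum, map_sum]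
    refine sum_eq_zero fun i _ => ?_
    rw [pointMonomial, map_mul, map_pow, map_pow, pow_add _ b 2, tmk_X_inr_sq, mul_zero, mul_zero]

theorem tmk_mem_of_mem_polarizedPowerSums {p : PolyUV k n} (hp : p ∈ polarizedPowerSums k n) :
    tmk k n p ∈ (separatelySymmetric k n).map (phiUV k n) := by
  have : (polarizedPowerSums k n).map (Ideal.Quotient.mkₐ k (cSqIdeal k n)) ≤
      (separatelySymmetric k n).map (phiUV k n) := by
    rw [polarizedPowerSums, AlgHom.map_adjoin, Algebra.adjoin_le_iff]
    rintro _ ⟨_, ⟨e, rfl⟩, rfl⟩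
    exact tmk_polarizedPowerSum_mem e
  exact this ⟨p, hp, rfl⟩

end PolyUV

/-- Over a field of characteristic zero, `φ` restricted to `(S_n × S_n)`-invariants
(`S_n` permuting the `u`'s and independently the `v`'s) surjects onto the diagonal
`S_n`-invariants of `k[x,c]/(c²)`. -/
theorem phi_surjective_char_zero (k : Type*) [Field k] [CharZero k] (n : ℕ) :
    ∀ q : TruncPoly k n,
      (∀ p : PolyUV k n, tmk k n p = q → ∀ σ : Equiv.Perm (Fin n),
        tmk k n (rename (Equiv.sumCongr σ σ) p) = q) →
      ∃ P : PolyUV k n,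
        (∀ σ τ : Equiv.Perm (Fin n), rename (Equiv.sumCongr σ τ) P = P) ∧
        phiUV k n P = q := by
  intro q hq
  obtain ⟨p, rfl⟩ := Ideal.Quotient.mk_surjective q
  have hsym : tmk k n (PolyUV.diagSymmetrize k n p) =
      Fintype.card (Equiv.Perm (Fin n)) • tmk k n p := by
    rw [PolyUV.diagSymmetrize_apply, map_sum, sum_congr rfl fun σ _ => hq p rfl σ, sum_const,
      card_univ]
    rfl
  have hmem := PolyUV.tmk_mem_of_mem_polarizedPowerSums
    (PolyUV.diagSymmetrize_mem_polarizedPowerSums p)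
  rw [hsym] at hmem
  exact Subalgebra.mem_of_nsmul_mem _ Fintype.card_ne_zero hmem
end
end

section
/- For 1 ≤ k ≤ n, let D_n^u = ∂_1^u···∂_{n-1}^u and D_n^v = ∂_1^v···∂_{n-1}^v be products of Demazure operators in the u- and v-variables respectively. Then the evaluation at u_1 = ··· = u_n = 0 of D_n^u D_n^v [ (v_1-u_n)²(v_2-u_n)²···(v_{n-1}-u_n)² (v_n - u_n) u_n^{k-1} ] equals (-1)^{k-1} σ_k(v_1,...,v_n), the k-th elementary symmetric polynomial in v_1,...,v_n (up to sign). -/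
/-!
Write `w = u_n`. Going down from `r = n - 1`, the operator `∂_r^v` meets exactly one factor that
is not symmetric in `v_r, v_{r+1}`: it turns `(v_r - w)² (v_{r+1} - w)` into
`(v_r - w)(v_{r+1} - w)`. Hence `D_n^v` leaves `w^{k-1} ∏_j (v_j - w)`, which by Vieta is
`∑_j (-1)^{n-j} σ_j(v) w^{k-1+n-j}`. These coefficients do not involve `u`, and `D_n^u` sends
`w^m` to `(-1)^{n-1}` times the divided difference of `t ↦ t^m` at `u_1, …, u_n`, that is, to
`(-1)^{n-1} h_{m+1-n}(u)`. At `u = 0` only `m = n - 1`, i.e. `j = k`, survives, with sign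
`(-1)^{n-k} (-1)^{n-1} = (-1)^{k-1}`.
-/

open MvPolynomial

theorem Fin.prod_filter_val_lt_succ {M : Type*} [CommMonoid M] {n : ℕ} (g : Fin n → M) (r : ℕ)
    (hr : r < n) :
    ∏ t : Fin n with t.val < r + 1, g t = g ⟨r, hr⟩ * ∏ t : Fin n with t.val < r, g t := by
  rw [← Finset.prod_insert (by simp)]
  congr 1
  ext t
  simp only [Order.lt_add_one_iff, Finset.mem_filter, Finset.mem_univ, true_and,
    Finset.mem_insert, Fin.ext_iff]
  omega

theorem Fin.prod_ite_lt_pred_sq_mul {M : Type*} [CommMonoid M] {n : ℕ} (hn : 0 < n)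
    (g : Fin n → M) :
    (∏ t : Fin n, if t.val < n - 1 then g t ^ 2 else 1) * g ⟨n - 1, by omega⟩
      = (∏ t, g t) * ∏ t : Fin n with t.val < n - 1, g t := by
  have hall : ∏ t, g t = g ⟨n - 1, by omega⟩ * ∏ t : Fin n with t.val < n - 1, g t := by
    rw [← Fin.prod_filter_val_lt_succ g (n - 1) (by omega), Nat.sub_add_cancel hn]
    simp
  rw [← Finset.prod_filter, Finset.prod_pow, hall, sq]
  ac_rfl

theorem List.drop_finRange_eq_cons {n j : ℕ} (hj : j < n) :
    (List.finRange n).drop j = ⟨j, hj⟩ :: (List.finRange n).drop (j + 1) := by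
  rw [List.drop_eq_getElem_cons (by simpa using hj)]
  simp

theorem rename_swap_rename_of_forall_ne {R σ τ : Type*} [CommRing R] [DecidableEq σ]
    (g : τ → σ) {a b : σ} (ha : ∀ t, g t ≠ a) (hb : ∀ t, g t ≠ b)
    (p : MvPolynomial τ R) :
    rename (Equiv.swap a b) (rename g p) = rename g p := by
  rw [rename_rename, show ⇑(Equiv.swap a b) ∘ g = g from
    funext fun t => Equiv.swap_apply_of_ne_of_ne (ha t) (hb t)]

theorem prod_X_sub_X_eq_sum_rename_esymm {R σ : Type*} [CommRing R] {n : ℕ} (v : Fin n → σ)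
    (z : σ) :
    ∏ t, (X (v t) - X z : MvPolynomial σ R)
      = ∑ j ∈ Finset.range (n + 1),
          (-1) ^ (n - j) * rename v (esymm (Fin n) R j) * X z ^ (n - j) := by
  have h := congrArg (Polynomial.eval₂RingHom (rename (R := R) v).toRingHom (-X z))
    (prod_C_add_X_eq_sum_esymm R (Fin n))
  simp only [map_prod, map_sum, map_mul, map_pow, map_add, Polynomial.coe_eval₂RingHom,
    Polynomial.eval₂_X, Polynomial.eval₂_C, AlgHom.toRingHom_eq_coe, RingHom.coe_coe, rename_X,
    Fintype.card_fin] at h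
  rw [Finset.prod_congr rfl fun t _ => sub_eq_neg_add (X (v t)) (X z), h]
  refine Finset.sum_congr rfl fun j _ => ?_
  rw [neg_pow]
  ring

section DivDiffPow

variable {S T : Type*} [CommRing S] [CommRing T]

/-- The divided difference of `t ↦ t ^ m` at the nodes `L`. For nonempty `L` it is the complete
homogeneous symmetric polynomial of degree `m + 1 - L.length` in the entries of `L`, and `0` when
that degree is negative. -/
def divDiffPow : List S → ℕ → S
  | [], _ => 0
  | [_], 0 => 1
  | _ :: _ :: _, 0 => 0
  | a :: L, m + 1 => a * divDiffPow (a :: L) m + divDiffPow L m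

@[simp]
theorem divDiffPow_singleton (a : S) (m : ℕ) : divDiffPow [a] m = a ^ m := by
  induction m with
  | zero => simp [divDiffPow]
  | succ m ih => simp [divDiffPow, ih, pow_succ, mul_comm]

theorem map_divDiffPow {F : Type*} [FunLike F S T] [RingHomClass F S T] (f : F) (L : List S)
    (m : ℕ) : f (divDiffPow L m) = divDiffPow (L.map f) m := by
  induction m generalizing L with
  | zero => rcases L with _ | ⟨a, _ | ⟨b, L⟩⟩ <;> simp [divDiffPow]
  | succ m ih => rcases L with _ | ⟨a, L⟩ <;> simp [divDiffPow, ih]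

theorem divDiffPow_of_forall_eq_zero {L : List S} (hL : ∀ a ∈ L, a = 0) (m : ℕ) :
    divDiffPow L m = if m + 1 = L.length then 1 else 0 := by
  induction m generalizing L with
  | zero => rcases L with _ | ⟨a, _ | ⟨b, L⟩⟩ <;> simp [divDiffPow]
  | succ m ih =>
    rcases L with _ | ⟨a, L⟩
    · simp [divDiffPow]
    · obtain rfl : a = 0 := hL a List.mem_cons_self
      rw [divDiffPow, zero_mul, zero_add, ih fun b hb => hL b (List.mem_cons_of_mem _ hb)]
      simp

theorem divDiffPow_cons_sub_cons (a b : S) (L : List S) (m : ℕ) :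
    divDiffPow (a :: L) m - divDiffPow (b :: L) m = (a - b) * divDiffPow (a :: b :: L) m := by
  induction m with
  | zero => rcases L with _ | ⟨c, L⟩ <;> simp [divDiffPow]
  | succ m ih =>
    simp only [divDiffPow]
    linear_combination a * ih

end DivDiffPow

section DemazureChain

variable {R σ : Type*} [CommRing R] [DecidableEq σ] {n : ℕ}

/-- `f r = ∂_r (f (r + 1))` for the Demazure operators `∂_r` in the variables `x`, with the
denominator cleared. -/
def IsDemazureChain (x : Fin n → σ) (f : ℕ → MvPolynomial σ R) : Prop :=
  ∀ (r : ℕ) (hr : r + 1 < n),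
    (X (x ⟨r, by omega⟩) - X (x ⟨r + 1, hr⟩)) * f r
      = f (r + 1) - rename (Equiv.swap (x ⟨r, by omega⟩) (x ⟨r + 1, hr⟩)) (f (r + 1))

theorem IsDemazureChain.const_mul {x : Fin n → σ} {f : ℕ → MvPolynomial σ R}
    (hf : IsDemazureChain x f) (c : MvPolynomial σ R)
    (hc : ∀ (r : ℕ) (hr : r + 1 < n),
      rename (Equiv.swap (x ⟨r, by omega⟩) (x ⟨r + 1, hr⟩)) c = c) :
    IsDemazureChain x fun j => c * f j := by
  intro r hr
  rw [map_mul, hc r hr, ← mul_sub, ← hf r hr]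
  ring

theorem isDemazureChain_sum {ι : Type*} {x : Fin n → σ} (s : Finset ι)
    {f : ι → ℕ → MvPolynomial σ R} (hf : ∀ i ∈ s, IsDemazureChain x (f i)) :
    IsDemazureChain x fun j => ∑ i ∈ s, f i j := by
  intro r hr
  rw [Finset.mul_sum, map_sum, ← Finset.sum_sub_distrib]
  exact Finset.sum_congr rfl fun i hi => hf i hi r hr

theorem IsDemazureChain.dComp_range [IsDomain R] {x : Fin n → σ} (hx : Function.Injective x)
    {D : ℕ → MvPolynomial σ R → MvPolynomial σ R}
    (hD : ∀ (r : ℕ) (hr : r + 1 < n) (P : MvPolynomial σ R),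
      (X (x ⟨r, by omega⟩) - X (x ⟨r + 1, hr⟩)) * D r P
        = P - rename (Equiv.swap (x ⟨r, by omega⟩) (x ⟨r + 1, hr⟩)) P)
    {f : ℕ → MvPolynomial σ R} (hf : IsDemazureChain x f) :
    DComp D (List.range (n - 1)) (f (n - 1)) = f 0 := by
  have step (r : ℕ) (hr : r + 1 < n) : D r (f (r + 1)) = f r :=
    mul_left_cancel₀ (sub_ne_zero.mpr (X_injective.ne (hx.ne (by simp))))
      ((hD r hr _).trans (hf r hr).symm)
  suffices ∀ c j, j + c = n - 1 → DComp D (List.range' j c) (f (n - 1)) = f j by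
    rw [List.range_eq_range']
    exact this _ 0 (by omega)
  intro c
  induction c with
  | zero =>
    intro j hj
    rw [show j = n - 1 by omega]
    rfl
  | succ c ih =>
    intro j hj
    rw [List.range'_succ]
    change D j (DComp D (List.range' (j + 1) c) (f (n - 1))) = f j
    rw [ih (j + 1) (by omega), step j (by omega)]

theorem isDemazureChain_prod_sub {v : Fin n → σ} (hv : Function.Injective v) {z : σ}
    (hz : ∀ t, v t ≠ z) :
    IsDemazureChain v fun j => (∏ t, (X (v t) - X z : MvPolynomial σ R)) *
      ∏ t : Fin n with t.val < j, (X (v t) - X z) := by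
  intro r hr
  set a : Fin n := ⟨r, by omega⟩
  set b : Fin n := ⟨r + 1, hr⟩
  have hzfix : rename (R := R) (Equiv.swap (v a) (v b)) (X z) = X z := by
    rw [rename_X, Equiv.swap_apply_of_ne_of_ne (hz a).symm (hz b).symm]
  have hall : rename (Equiv.swap (v a) (v b)) (∏ t, (X (v t) - X z : MvPolynomial σ R))
      = ∏ t, (X (v t) - X z) := by
    simp only [map_prod, map_sub, rename_X, hzfix, hv.swap_apply]
    exact Equiv.prod_comp (Equiv.swap a b) fun t => X (v t) - X z
  have hlow : rename (Equiv.swap (v a) (v b))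
      (∏ t : Fin n with t.val < r, (X (v t) - X z : MvPolynomial σ R))
      = ∏ t : Fin n with t.val < r, (X (v t) - X z) := by
    rw [map_prod]
    refine Finset.prod_congr rfl fun t ht => ?_
    have ht : t.val < r := (Finset.mem_filter.mp ht).2
    rw [map_sub, rename_X, hzfix, hv.swap_apply, Equiv.swap_apply_of_ne_of_ne]
    · exact ne_of_lt (show t < a from ht)
    · exact ne_of_lt (show t < b from Nat.lt_succ_of_lt ht)
  dsimp only
  rw [Fin.prod_filter_val_lt_succ _ r (by omega), map_mul, map_mul, hall, hlow, map_sub,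
    rename_X, hzfix, Equiv.swap_apply_left]
  ring

theorem isDemazureChain_divDiffPow {u : Fin n → σ} (hu : Function.Injective u) (m : ℕ) :
    IsDemazureChain u fun j => (-1) ^ (n + 1 + j) *
      divDiffPow (((List.finRange n).drop j).map fun t => (X (u t) : MvPolynomial σ R)) m := by
  intro r hr
  dsimp only
  rw [List.drop_finRange_eq_cons (j := r) (by omega), List.drop_finRange_eq_cons hr]
  set a : Fin n := ⟨r, by omega⟩
  set b : Fin n := ⟨r + 1, hr⟩
  set L := ((List.finRange n).drop (r + 1 + 1)).map fun t => (X (u t) : MvPolynomial σ R)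
    with hL_def
  have hL : L.map (rename (Equiv.swap (u a) (u b))) = L := by
    rw [hL_def, List.map_map]
    refine List.map_congr_left fun t ht => ?_
    obtain ⟨i, hi, rfl⟩ := List.mem_drop_iff_getElem.mp ht
    rw [Function.comp_apply, rename_X, Equiv.swap_apply_of_ne_of_ne] <;>
      simp only [List.getElem_finRange, Fin.cast_mk, ne_eq, hu.eq_iff, Fin.ext_iff, a, b] <;>
      omega
  rw [map_mul, map_pow, map_neg, map_one, map_divDiffPow]
  simp only [List.map_cons, ← hL_def, hL, rename_X, Equiv.swap_apply_right]
  linear_combination (-(-1 : MvPolynomial σ R) ^ (n + 1 + r)) *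
    divDiffPow_cons_sub_cons (X (u a)) (X (u b)) L m

variable [IsDomain R]

theorem dComp_range_prod_sq_mul_pow (hn : 0 < n) {v : Fin n → σ} (hv : Function.Injective v)
    {z : σ} (hz : ∀ t, v t ≠ z) {D : ℕ → MvPolynomial σ R → MvPolynomial σ R}
    (hD : ∀ (r : ℕ) (hr : r + 1 < n) (P : MvPolynomial σ R),
      (X (v ⟨r, by omega⟩) - X (v ⟨r + 1, hr⟩)) * D r P
        = P - rename (Equiv.swap (v ⟨r, by omega⟩) (v ⟨r + 1, hr⟩)) P)
    (m : ℕ) :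
    DComp D (List.range (n - 1))
        ((∏ t : Fin n, if t.val < n - 1 then (X (v t) - X z) ^ 2 else 1) *
          (X (v ⟨n - 1, by omega⟩) - X z) * X z ^ m)
      = X z ^ m * ∏ t, (X (v t) - X z) := by
  have hchain := (isDemazureChain_prod_sub (R := R) hv hz).const_mul (X z ^ m) fun r hr => by
    rw [map_pow, rename_X, Equiv.swap_apply_of_ne_of_ne (hz _).symm (hz _).symm]
  rw [mul_comm _ (X z ^ m), Fin.prod_ite_lt_pred_sq_mul hn fun t => X (v t) - X z,
    hchain.dComp_range hv hD, Finset.filter_false_of_mem (by simp), Finset.prod_empty, mul_one]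

theorem dComp_range_sum_mul_pow (hn : 0 < n) {u : Fin n → σ} (hu : Function.Injective u)
    {D : ℕ → MvPolynomial σ R → MvPolynomial σ R}
    (hD : ∀ (r : ℕ) (hr : r + 1 < n) (P : MvPolynomial σ R),
      (X (u ⟨r, by omega⟩) - X (u ⟨r + 1, hr⟩)) * D r P
        = P - rename (Equiv.swap (u ⟨r, by omega⟩) (u ⟨r + 1, hr⟩)) P)
    {ι : Type*} (s : Finset ι) (c : ι → MvPolynomial σ R) (d : ι → ℕ)
    (hc : ∀ i ∈ s, ∀ (r : ℕ) (hr : r + 1 < n),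
      rename (Equiv.swap (u ⟨r, by omega⟩) (u ⟨r + 1, hr⟩)) (c i) = c i) :
    DComp D (List.range (n - 1)) (∑ i ∈ s, c i * X (u ⟨n - 1, by omega⟩) ^ d i)
      = ∑ i ∈ s, c i * ((-1) ^ (n + 1) *
          divDiffPow ((List.finRange n).map fun t => (X (u t) : MvPolynomial σ R)) (d i)) := by
  have hchain := isDemazureChain_sum s fun i hi =>
    (isDemazureChain_divDiffPow (R := R) hu (d i)).const_mul (c i) (hc i hi)
  have hlast : ((List.finRange n).drop (n - 1)).map (fun t => (X (u t) : MvPolynomial σ R))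
      = [X (u ⟨n - 1, by omega⟩)] := by
    rw [List.drop_finRange_eq_cons (by omega),
      List.drop_eq_nil_of_le (by rw [List.length_finRange]; omega)]
    rfl
  have hsign : (-1 : MvPolynomial σ R) ^ (n + 1 + (n - 1)) = 1 := by
    rw [show n + 1 + (n - 1) = 2 * n by omega, pow_mul, neg_one_sq, one_pow]
  have h := hchain.dComp_range hu hD
  simp only [hlast, divDiffPow_singleton, hsign, one_mul, add_zero, List.drop_zero] at h
  exact h

end DemazureChain

/-- For `1 ≤ k ≤ n`, with `D_n^u = ∂_1^u⋯∂_{n-1}^u` and `D_n^v = ∂_1^v⋯∂_{n-1}^v` the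
compositions of Demazure operators in the `u`-variables (`inl`) and `v`-variables (`inr`)
respectively, the evaluation at `u_1 = ⋯ = u_n = 0` of
`D_n^u D_n^v [(v_1-u_n)²⋯(v_{n-1}-u_n)²(v_n-u_n)u_n^{k-1}]` equals
`(-1)^{k-1} σ_k(v_1,…,v_n)`, the `k`-th elementary symmetric polynomial up to sign. -/
theorem shuffle_elementary_symmetric (R : Type*) [CommRing R] [IsDomain R]
    (n k : ℕ) (hn : 0 < n) (hk1 : 1 ≤ k) (hkn : k ≤ n)
    (Du Dv : ℕ → MvPolynomial (Fin n ⊕ Fin n) R → MvPolynomial (Fin n ⊕ Fin n) R)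
    (hDu : ∀ (r : ℕ) (hr : r + 1 < n) (P : MvPolynomial (Fin n ⊕ Fin n) R),
      (X (Sum.inl (⟨r, by omega⟩ : Fin n)) - X (Sum.inl ⟨r + 1, hr⟩)) * Du r P
        = P - rename (Equiv.swap (Sum.inl (⟨r, by omega⟩ : Fin n))
            (Sum.inl (⟨r + 1, hr⟩ : Fin n))) P)
    (hDv : ∀ (r : ℕ) (hr : r + 1 < n) (P : MvPolynomial (Fin n ⊕ Fin n) R),
      (X (Sum.inr (⟨r, by omega⟩ : Fin n)) - X (Sum.inr ⟨r + 1, hr⟩)) * Dv r P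
        = P - rename (Equiv.swap (Sum.inr (⟨r, by omega⟩ : Fin n))
            (Sum.inr (⟨r + 1, hr⟩ : Fin n))) P) :
    aeval (Sum.elim (fun _ => (0 : MvPolynomial (Fin n) R)) (fun j => X j))
        (DComp Du (List.range (n - 1)) (DComp Dv (List.range (n - 1))
          ((∏ t : Fin n, if (t : ℕ) < n - 1 then
              (X (Sum.inr t) - X (Sum.inl (⟨n - 1, by omega⟩ : Fin n))) ^ 2 else 1) *
            (X (Sum.inr (⟨n - 1, by omega⟩ : Fin n))
              - X (Sum.inl (⟨n - 1, by omega⟩ : Fin n))) *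
            X (Sum.inl (⟨n - 1, by omega⟩ : Fin n)) ^ (k - 1))))
      = (-1 : MvPolynomial (Fin n) R) ^ (k - 1) * MvPolynomial.esymm (Fin n) R k := by
  set w : Fin n ⊕ Fin n := Sum.inl ⟨n - 1, by omega⟩
  set φ : MvPolynomial (Fin n ⊕ Fin n) R →ₐ[R] MvPolynomial (Fin n) R :=
    aeval (Sum.elim (fun _ => (0 : MvPolynomial (Fin n) R)) (fun j => X j))
  have hexpand : X w ^ (k - 1) * ∏ t, (X (Sum.inr t) - X w)
      = ∑ j ∈ Finset.range (n + 1), ((-1) ^ (n - j) * rename Sum.inr (esymm (Fin n) R j)) *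
          X w ^ (k - 1 + (n - j)) := by
    rw [prod_X_sub_X_eq_sum_rename_esymm, Finset.mul_sum]
    exact Finset.sum_congr rfl fun j _ => by ring
  have heval (m : ℕ) : φ (divDiffPow ((List.finRange n).map fun t => X (Sum.inl t)) m)
      = if m + 1 = n then 1 else 0 := by
    rw [map_divDiffPow, divDiffPow_of_forall_eq_zero] <;> simp [φ]
  have hsign : (-1 : MvPolynomial (Fin n) R) ^ (n - k) * (-1) ^ (n + 1) = (-1) ^ (k - 1) := by
    rw [← pow_add, show n - k + (n + 1) = k - 1 + 2 * (n - k + 1) by omega, pow_add, pow_mul,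
      neg_one_sq, one_pow, mul_one]
  rw [dComp_range_prod_sq_mul_pow hn Sum.inr_injective (by simp [w]) hDv, hexpand,
    dComp_range_sum_mul_pow hn Sum.inl_injective hDu _ _ _ fun j _ r hr => by
      rw [map_mul, rename_swap_rename_of_forall_ne _ (by simp) (by simp), map_pow, map_neg,
        map_one],
    map_sum, Finset.sum_eq_single k]
  · simp only [map_mul, map_pow, map_neg, map_one, heval, φ, aeval_rename, Sum.elim_comp_inr,
      aeval_X_left_apply, if_pos (show k - 1 + (n - k) + 1 = n by omega), mul_one]
    linear_combination esymm (Fin n) R k * hsign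
  · intro i hi hik
    rw [Finset.mem_range] at hi
    simp only [map_mul, heval, if_neg (show k - 1 + (n - i) + 1 ≠ n by omega), mul_zero]
  · intro hk
    exact absurd (Finset.mem_range.mpr (by omega)) hk
end
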